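/- Let u = (√13 − 1)/6 (the positive root of 3u² + u − 1 = 0). There exist 20 unit vectors x_1, …, x_20 in EuclideanSpace ℝ (Fin 4) such that ⟨x_i, x_j⟩ ≤ u for all i ≠ j. -/

import Mathlib

open scoped InnerProductSpace

/-!
The code is antipodal: it consists of ten explicit unit vectors `v i` and their negatives, and
`|⟪v i, v j⟫| ≤ u` for `i ≠ j`. The `k`-th coordinate of `v i` has the form `a * √w` with `a` and
`w` in `ℚ(√13)`, so every inner product lies in `ℚ(√13)`. After clearing denominators, all the
required identities and inequalities hold exactly in `ℤ√13`, where they are decided, and they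
transfer to `ℝ` because the embedding `ℤ√13 → ℝ` is monotone. Some of the bounds are attained,
so the comparison has to be exact.
-/

namespace Zsqrtd

theorem toReal_nonneg {d : ℕ} {a : ℤ√d} (ha : 0 ≤ a) : 0 ≤ toReal (Int.natCast_nonneg d) a := by
  have hs : √(d : ℝ) * √(d : ℝ) = d := Real.mul_self_sqrt d.cast_nonneg
  have hsq (y : ℕ) : (y * √(d : ℝ)) * (y * √(d : ℝ)) = d * y * y := by
    linear_combination (y : ℝ) * y * hs
  rcases nonneg_cases (nonneg_iff_zero_le.2 ha) with ⟨x, y, rfl | rfl | rfl⟩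
  · simp only [toReal_apply, Int.cast_natCast]
    positivity
  · have hle : (d : ℝ) * y * y ≤ x * x := by
      exact_mod_cast (by simpa [SqLe] using nonnegg_pos_neg.1 (nonneg_iff_zero_le.2 ha))
    have hyx : y * √(d : ℝ) ≤ x :=
      (mul_self_le_mul_self_iff (by positivity) (by positivity)).2 ((hsq y).trans_le hle)
    simp only [toReal_apply, Int.cast_neg, Int.cast_natCast]
    linarith
  · have hle : (x : ℝ) * x ≤ d * y * y := by
      exact_mod_cast (by simpa [SqLe] using nonnegg_neg_pos.1 (nonneg_iff_zero_le.2 ha))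
    have hxy : (x : ℝ) ≤ y * √(d : ℝ) :=
      (mul_self_le_mul_self_iff (by positivity) (by positivity)).2 (hle.trans_eq (hsq y).symm)
    simp only [toReal_apply, Int.cast_neg, Int.cast_natCast]
    linarith

theorem toReal_mono {d : ℕ} : Monotone (toReal (Int.natCast_nonneg d) : ℤ√d → ℝ) :=
  fun a b hab => sub_nonneg.1 (map_sub (toReal _) b a ▸ toReal_nonneg (sub_nonneg.2 hab))

end Zsqrtd

section SphericalCode

variable {E ι κ : Type*} [NormedAddCommGroup E] [InnerProductSpace ℝ E]

def IsSphericalCode (x : ι → E) (u : ℝ) : Prop :=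
  (∀ i, ‖x i‖ = 1) ∧ Pairwise fun i j => ⟪x i, x j⟫_ℝ ≤ u

theorem IsSphericalCode.comp {x : ι → E} {u : ℝ} (hx : IsSphericalCode x u) {f : κ → ι}
    (hf : Function.Injective f) : IsSphericalCode (x ∘ f) u :=
  ⟨fun i => hx.1 (f i), fun _ _ hij => hx.2 (hf.ne hij)⟩

theorem isSphericalCode_sumElim_neg {v : ι → E} {u : ℝ} (hv : ∀ i, ‖v i‖ = 1)
    (hvu : Pairwise fun i j => |⟪v i, v j⟫_ℝ| ≤ u) (hu : -1 ≤ u) :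
    IsSphericalCode (Sum.elim v (-v)) u := by
  have hinner_neg (i j : ι) : -⟪v i, v j⟫_ℝ ≤ u := by
    rcases eq_or_ne i j with rfl | hij
    · simpa [real_inner_self_eq_norm_sq, hv] using hu
    · exact (neg_le_abs _).trans (hvu hij)
  refine ⟨fun i => by cases i <;> simp [hv], ?_⟩
  rintro (i | i) (j | j) hij
  · exact (le_abs_self _).trans (hvu fun h => hij (congrArg _ h))
  · simpa using hinner_neg i j
  · simpa using hinner_neg i j
  · simpa using (le_abs_self _).trans (hvu fun h => hij (congrArg _ h))

end SphericalCode

theorem EuclideanSpace.inner_toLp_sqrt_mul {ι : Type*} [Fintype ι] {w : ι → ℝ}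
    (hw : ∀ k, 0 ≤ w k) (a b : ι → ℝ) :
    ⟪(WithLp.toLp 2 fun k => √(w k) * a k : EuclideanSpace ℝ ι),
      WithLp.toLp 2 fun k => √(w k) * b k⟫_ℝ = ∑ k, w k * a k * b k := by
  simp only [PiLp.inner_apply, RCLike.inner_apply, conj_trivial]
  refine Finset.sum_congr rfl fun k _ => ?_
  have := Real.mul_self_sqrt (hw k)
  linear_combination a k * b k * this

namespace TenLines

open Zsqrtd

local notation "φ" => toReal (Int.natCast_nonneg 13)

def coord : Fin 10 → Fin 4 → ℤ√(13 : ℕ) := ![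
  ![⟨36, 0⟩, 0, 0, 0],
  ![⟨6, -6⟩, ⟨36, 0⟩, 0, 0],
  ![⟨-6, 6⟩, ⟨6, 6⟩, ⟨36, 0⟩, 0],
  ![⟨12, 0⟩, ⟨16, -8⟩, ⟨48, -24⟩, ⟨36, 0⟩],
  ![⟨-6, 6⟩, ⟨54, -18⟩, ⟨18, -18⟩, ⟨9, -9⟩],
  ![⟨6, -6⟩, ⟨84, -24⟩, ⟨108, -36⟩, ⟨18, -18⟩],
  ![⟨6, -6⟩, ⟨-54, 18⟩, ⟨-144, 36⟩, ⟨-18, 18⟩],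
  ![⟨-12, 0⟩, ⟨32, -16⟩, ⟨60, -12⟩, ⟨36, 0⟩],
  ![⟨12, 0⟩, ⟨16, -8⟩, ⟨12, 12⟩, 0],
  ![⟨-6, 6⟩, ⟨6, 6⟩, ⟨-90, 18⟩, ⟨-9, 9⟩]]

def weight : Fin 4 → ℤ√(13 : ℕ) := ![⟨18, 0⟩, ⟨11, 1⟩, ⟨6, 0⟩, ⟨-36, 12⟩]

def gram (i j : Fin 10) : ℤ√(13 : ℕ) := ∑ k, weight k * coord i k * coord j k

theorem weight_nonneg : ∀ k, 0 ≤ weight k := by decide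

theorem gram_self : ∀ i, gram i i = 23328 := by decide

theorem gram_bounds : ∀ i j, i ≠ j →
    -(23328 * (sqrtd - 1)) ≤ 6 * gram i j ∧ 6 * gram i j ≤ 23328 * (sqrtd - 1) := by
  decide

noncomputable def line (i : Fin 10) : EuclideanSpace ℝ (Fin 4) :=
  WithLp.toLp 2 fun k => √(φ (weight k) / 18) * (φ (coord i k) / 36)

-- `23328 = 18 * 36 ^ 2`
theorem inner_line (i j : Fin 10) : ⟪line i, line j⟫_ℝ = φ (gram i j) / 23328 := by
  have hw k : 0 ≤ φ (weight k) / 18 :=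
    div_nonneg (by simpa using toReal_mono (weight_nonneg k)) (by norm_num)
  rw [line, line, EuclideanSpace.inner_toLp_sqrt_mul hw, gram, map_sum, Finset.sum_div]
  refine Finset.sum_congr rfl fun k _ => ?_
  rw [map_mul, map_mul]
  ring

theorem norm_line (i : Fin 10) : ‖line i‖ = 1 := by
  have h : ‖line i‖ ^ 2 = 1 := by
    rw [← real_inner_self_eq_norm_sq, inner_line, gram_self, map_ofNat]
    norm_num
  exact (pow_eq_one_iff_of_nonneg (norm_nonneg _) two_ne_zero).1 h

theorem abs_inner_line_le {i j : Fin 10} (hij : i ≠ j) :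
    |⟪line i, line j⟫_ℝ| ≤ (√13 - 1) / 6 := by
  have hφ : φ (23328 * (sqrtd - 1)) = 23328 * (√13 - 1) := by
    have hsqrtd : φ sqrtd = √13 := by simp
    rw [map_mul, map_sub, map_one, map_ofNat, hsqrtd]
  obtain ⟨hlo, hhi⟩ := gram_bounds i j hij
  have hlo' := toReal_mono hlo
  have hhi' := toReal_mono hhi
  rw [map_neg, hφ, map_mul, map_ofNat] at hlo'
  rw [hφ, map_mul, map_ofNat] at hhi'
  rw [inner_line, abs_le]
  constructor <;> linarith

end TenLines

open TenLines in
/-- Let `u = (Real.sqrt 13 - 1) / 6` (the positive root of 3u² + u - 1 = 0). There exist 20 unit vectors in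
`EuclideanSpace ℝ (Fin 4)` whose pairwise inner products are all at most `u`. -/
theorem exists_spherical_code_20_points_dim4 :
    ∀ u : ℝ, u = (Real.sqrt 13 - 1) / 6 →
      ∃ x : Fin 20 → EuclideanSpace ℝ (Fin 4),
        (∀ i, ‖x i‖ = 1) ∧ ∀ i j, i ≠ j → ⟪x i, x j⟫_ℝ ≤ u := by
  rintro u rfl
  have hu : (-1 : ℝ) ≤ (√13 - 1) / 6 := by
    have : (1 : ℝ) ≤ √13 := Real.one_le_sqrt.2 (by norm_num)
    linarith
  have hcode := (isSphericalCode_sumElim_neg norm_line (fun _ _ => abs_inner_line_le) hu).comp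
    (finSumFinEquiv (m := 10) (n := 10)).symm.injective
  exact ⟨_, hcode.1, fun _ _ hij => hcode.2 hij⟩
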